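/- Suppose ≽ satisfies A1 (weak order), weak separability (A2), A3, A4, and restricted solvability (A8). Let a₀, b₀ ∈ X₁ with a₀ ≽₁ b₀, and suppose there exists p ∈ X₂ such that a₀p ∈ Θ and b₀p ∈ Θ. Define X_{a₀b₀} = {x₁ ∈ X₁ : a₀ ≽₁ x₁ and x₁ ≽₁ b₀}. Then ≽ satisfies triple cancellation on the set X_{a₀b₀} × X₂. -/

import Mathlib

open Set
open scoped Classical

section ChoquetAxioms

variable {X₁ X₂ : Type*}

/-- Asymmetric (strict) part of a relation. -/
def SP (R : X₁ × X₂ → X₁ × X₂ → Prop) (x y : X₁ × X₂) : Prop := R x y ∧ ¬ R y x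

/-- Symmetric (indifference) part of a relation. -/
def IP (R : X₁ × X₂ → X₁ × X₂ → Prop) (x y : X₁ × X₂) : Prop := R x y ∧ R y x

/-- Triple cancellation on a set `A`. -/
def TCancel (R : X₁ × X₂ → X₁ × X₂ → Prop) (A : Set (X₁ × X₂)) : Prop :=
  ∀ a b c d : X₁, ∀ p q r s : X₂,
    (a,p) ∈ A → (b,q) ∈ A → (a,r) ∈ A → (b,s) ∈ A →
    (c,p) ∈ A → (d,q) ∈ A → (c,r) ∈ A → (d,s) ∈ A →
    R (b,q) (a,p) → R (a,r) (b,s) → R (c,p) (d,q) → R (c,r) (d,s)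

/-- A1: weak order (complete and transitive). -/
def A1 (R : X₁ × X₂ → X₁ × X₂ → Prop) : Prop :=
  (∀ x y, R x y ∨ R y x) ∧ (∀ x y z, R x y → R y z → R x z)

/-- A2: weak separability. -/
def A2 (R : X₁ × X₂ → X₁ × X₂ → Prop) : Prop :=
  (∀ a b : X₁, ∀ p : X₂, SP R (a,p) (b,p) → ∀ q : X₂, R (a,q) (b,q)) ∧
  (∀ p q : X₂, ∀ a : X₁, SP R (a,p) (a,q) → ∀ b : X₁, R (b,p) (b,q))

/-- Induced order on the first coordinate. -/
def Ge1 (R : X₁ × X₂ → X₁ × X₂ → Prop) (a b : X₁) : Prop := ∀ p : X₂, R (a,p) (b,p)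

/-- Induced order on the second coordinate. -/
def Ge2 (R : X₁ × X₂ → X₁ × X₂ → Prop) (p q : X₂) : Prop := ∀ a : X₁, R (a,p) (a,q)

def Max1 (R : X₁ × X₂ → X₁ × X₂ → Prop) (a : X₁) : Prop := ∀ b : X₁, Ge1 R a b
def Min1 (R : X₁ × X₂ → X₁ × X₂ → Prop) (a : X₁) : Prop := ∀ b : X₁, Ge1 R b a
def Max2 (R : X₁ × X₂ → X₁ × X₂ → Prop) (p : X₂) : Prop := ∀ q : X₂, Ge2 R p q
def Min2 (R : X₁ × X₂ → X₁ × X₂ → Prop) (p : X₂) : Prop := ∀ q : X₂, Ge2 R q p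

/-- The south-east rectangular cone at `z`. -/
def SEz (R : X₁ × X₂ → X₁ × X₂ → Prop) (z : X₁ × X₂) : Set (X₁ × X₂) :=
  {x | Ge1 R x.1 z.1 ∧ Ge2 R z.2 x.2}

/-- The north-west rectangular cone at `z`. -/
def NWz (R : X₁ × X₂ → X₁ × X₂ → Prop) (z : X₁ × X₂) : Set (X₁ × X₂) :=
  {x | Ge2 R x.2 z.2 ∧ Ge1 R z.1 x.1}

/-- A3: at every point, triple cancellation holds on `SEz z` or on `NWz z`. -/
def A3 (R : X₁ × X₂ → X₁ × X₂ → Prop) : Prop :=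
  ∀ z : X₁ × X₂, TCancel R (SEz R z) ∨ TCancel R (NWz R z)

/-- The region SE. -/
def SEreg (R : X₁ × X₂ → X₁ × X₂ → Prop) : Set (X₁ × X₂) :=
  {x | (∃ z : X₁ × X₂, ¬ Max1 R z.1 ∧ ¬ Min2 R z.2 ∧ TCancel R (SEz R z) ∧ x ∈ SEz R z) ∨
       ((Max1 R x.1 ∨ Min2 R x.2) ∧ ∀ y ∈ SEz R x, y ≠ x → ¬ TCancel R (NWz R y))}

/-- The region NW. -/
def NWreg (R : X₁ × X₂ → X₁ × X₂ → Prop) : Set (X₁ × X₂) :=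
  {x | (∃ z : X₁ × X₂, ¬ Min1 R z.1 ∧ ¬ Max2 R z.2 ∧ TCancel R (NWz R z) ∧ x ∈ NWz R z) ∨
       ((Min1 R x.1 ∨ Max2 R x.2) ∧ ∀ y ∈ NWz R x, y ≠ x → ¬ TCancel R (SEz R y))}

/-- Θ = SE ∩ NW. -/
def Theta (R : X₁ × X₂ → X₁ × X₂ → Prop) : Set (X₁ × X₂) := SEreg R ∩ NWreg R

/-- Extreme points of SE. -/
def SEext (R : X₁ × X₂ → X₁ × X₂ → Prop) : Set (X₁ × X₂) :=
  {x | x ∈ Theta R ∧ (Min2 R x.2 ∨ Max1 R x.1)}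

/-- Extreme points of NW. -/
def NWext (R : X₁ × X₂ → X₁ × X₂ → Prop) : Set (X₁ × X₂) :=
  {x | x ∈ Theta R ∧ (Min1 R x.1 ∨ Max2 R x.2)}

/-- Coordinate 1 is essential on `A`. -/
def Ess1 (R : X₁ × X₂ → X₁ × X₂ → Prop) (A : Set (X₁ × X₂)) : Prop :=
  ∃ a b : X₁, ∃ p : X₂, (a,p) ∈ A ∧ (b,p) ∈ A ∧ SP R (a,p) (b,p)

/-- Coordinate 2 is essential on `A`. -/
def Ess2 (R : X₁ × X₂ → X₁ × X₂ → Prop) (A : Set (X₁ × X₂)) : Prop :=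
  ∃ p q : X₂, ∃ a : X₁, (a,p) ∈ A ∧ (a,q) ∈ A ∧ SP R (a,p) (a,q)

/-- Four points all belonging to a set. -/
def In4 (A : Set (X₁ × X₂)) (w x y z : X₁ × X₂) : Prop :=
  w ∈ A ∧ x ∈ A ∧ y ∈ A ∧ z ∈ A

/-- A4. -/
def A4 (R : X₁ × X₂ → X₁ × X₂ → Prop) : Prop :=
  ∀ a b c d : X₁, ∀ p q r s : X₂,
    ((In4 (NWreg R) (a,p) (b,q) (a,r) (b,s) ∧ In4 (NWreg R) (c,p) (d,q) (c,r) (d,s)) ∨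
     (In4 (SEreg R) (a,p) (b,q) (a,r) (b,s) ∧ In4 (SEreg R) (c,p) (d,q) (c,r) (d,s)) ∨
     (In4 (NWreg R) (a,p) (b,q) (a,r) (b,s) ∧ Ess2 R (NWreg R) ∧
        In4 (SEreg R) (c,p) (d,q) (c,r) (d,s)) ∨
     (In4 (SEreg R) (a,p) (b,q) (a,r) (b,s) ∧ Ess2 R (SEreg R) ∧
        In4 (NWreg R) (c,p) (d,q) (c,r) (d,s)) ∨
     (In4 (NWreg R) (a,p) (b,q) (c,p) (d,q) ∧ Ess1 R (NWreg R) ∧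
        In4 (SEreg R) (a,r) (b,s) (c,r) (d,s)) ∨
     (In4 (SEreg R) (a,p) (b,q) (c,p) (d,q) ∧ Ess1 R (SEreg R) ∧
        In4 (NWreg R) (a,r) (b,s) (c,r) (d,s))) →
    R (b,q) (a,p) → R (a,r) (b,s) → R (c,p) (d,q) → R (c,r) (d,s)

/-- One half of A5 (stated for the given coordinate order). -/
def A5half (R : X₁ × X₂ → X₁ × X₂ → Prop) : Prop :=
  ∀ a b c d e g x₀ x₁ : X₁, ∀ p q y₀ y₁ πa πb πc πd : X₂,
    ((In4 (NWreg R) (a,p) (b,q) (c,p) (d,q) ∧ Ess1 R (NWreg R)) ∨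
     (In4 (SEreg R) (a,p) (b,q) (c,p) (d,q) ∧ Ess1 R (SEreg R))) →
    (In4 (NWreg R) (a,y₀) (b,y₀) (c,y₁) (d,y₁) ∨
     In4 (SEreg R) (a,y₀) (b,y₀) (c,y₁) (d,y₁)) →
    ((In4 (NWreg R) (x₀,πa) (x₀,πb) (x₁,πc) (x₁,πd) ∧ Ess2 R (NWreg R)) ∨
     (In4 (SEreg R) (x₀,πa) (x₀,πb) (x₁,πc) (x₁,πd) ∧ Ess2 R (SEreg R))) →
    (In4 (NWreg R) (e,πa) (g,πb) (e,πc) (g,πd) ∨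
     In4 (SEreg R) (e,πa) (g,πb) (e,πc) (g,πd)) →
    R (b,q) (a,p) → R (c,p) (d,q) →
    IP R (a,y₀) (x₀,πa) → IP R (b,y₀) (x₀,πb) →
    IP R (c,y₁) (x₁,πc) → IP R (d,y₁) (x₁,πd) →
    R (e,πa) (g,πb) → R (e,πc) (g,πd)

/-- The relation with the roles of the two coordinates exchanged. -/
def swapRel (R : X₁ × X₂ → X₁ × X₂ → Prop) : X₂ × X₁ → X₂ × X₁ → Prop :=
  fun x y => R (x.2, x.1) (y.2, y.1)

/-- A5 : the condition together with its symmetric (coordinate-exchanged) version. -/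
def A5 (R : X₁ × X₂ → X₁ × X₂ → Prop) : Prop :=
  A5half R ∧ A5half (swapRel R)

/-- A6 : bi-independence. -/
def A6 (R : X₁ × X₂ → X₁ × X₂ → Prop) : Prop :=
  (∀ a b c d : X₁, ∀ p : X₂,
    (In4 (SEreg R) (a,p) (b,p) (c,p) (d,p) ∨ In4 (NWreg R) (a,p) (b,p) (c,p) (d,p)) →
    SP R (a,p) (b,p) → (∃ q : X₂, SP R (c,q) (d,q)) → SP R (c,p) (d,p)) ∧
  (∀ p q r s : X₂, ∀ a : X₁,
    (In4 (SEreg R) (a,p) (a,q) (a,r) (a,s) ∨ In4 (NWreg R) (a,p) (a,q) (a,r) (a,s)) →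
    SP R (a,p) (a,q) → (∃ b : X₁, SP R (b,r) (b,s)) → SP R (a,r) (a,s))

/-- A7 : both coordinates are essential on X. -/
def A7 (R : X₁ × X₂ → X₁ × X₂ → Prop) : Prop :=
  Ess1 R Set.univ ∧ Ess2 R Set.univ

/-- A8 : restricted solvability. -/
def A8 (R : X₁ × X₂ → X₁ × X₂ → Prop) : Prop :=
  (∀ a : X₁, ∀ p r : X₂, ∀ y : X₁ × X₂,
    R (a,p) y → R y (a,r) → ∃ b : X₂, IP R (a,b) y) ∧
  (∀ p : X₂, ∀ a c : X₁, ∀ y : X₁ × X₂,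
    R (a,p) y → R y (c,p) → ∃ b : X₁, IP R (b,p) y)

/-- `S` is an interval of integers. -/
def IsIntervalZ (S : Set ℤ) : Prop :=
  ∀ i j k : ℤ, i ≤ j → j ≤ k → i ∈ S → k ∈ S → j ∈ S

/-- Standard sequence on X₁. -/
def StdSeq1 (R : X₁ × X₂ → X₁ × X₂ → Prop) (S : Set ℤ) (g : ℤ → X₁) (y₀ y₁ : X₂) : Prop :=
  IsIntervalZ S ∧ ¬ (Ge2 R y₀ y₁ ∧ Ge2 R y₁ y₀) ∧
  ∀ i, i ∈ S → (i+1) ∈ S → IP R (g i, y₀) (g (i+1), y₁)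

def BoundedSeq1 (R : X₁ × X₂ → X₁ × X₂ → Prop) (S : Set ℤ) (g : ℤ → X₁) (y₀ : X₂) : Prop :=
  ∃ u v : X₁ × X₂, ∀ i ∈ S, R u (g i, y₀) ∧ R (g i, y₀) v

/-- Standard sequence on X₂. -/
def StdSeq2 (R : X₁ × X₂ → X₁ × X₂ → Prop) (S : Set ℤ) (h : ℤ → X₂) (x₀ x₁ : X₁) : Prop :=
  IsIntervalZ S ∧ ¬ (Ge1 R x₀ x₁ ∧ Ge1 R x₁ x₀) ∧
  ∀ i, i ∈ S → (i+1) ∈ S → IP R (x₀, h i) (x₁, h (i+1))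

def BoundedSeq2 (R : X₁ × X₂ → X₁ × X₂ → Prop) (S : Set ℤ) (h : ℤ → X₂) (x₀ : X₁) : Prop :=
  ∃ u v : X₁ × X₂, ∀ i ∈ S, R u (x₀, h i) ∧ R (x₀, h i) v

/-- A9 : Archimedean axiom. -/
def A9 (R : X₁ × X₂ → X₁ × X₂ → Prop) : Prop :=
  (∀ z ∈ NWreg R, ∀ (S : Set ℤ) (g : ℤ → X₁) (y₀ y₁ : X₂),
    StdSeq1 R S g y₀ y₁ → BoundedSeq1 R S g y₀ →
    (∀ i ∈ S, (g i, y₀) ∈ NWz R z ∧ (g i, y₁) ∈ NWz R z) → S.Finite) ∧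
  (∀ z ∈ SEreg R, ∀ (S : Set ℤ) (g : ℤ → X₁) (y₀ y₁ : X₂),
    StdSeq1 R S g y₀ y₁ → BoundedSeq1 R S g y₀ →
    (∀ i ∈ S, (g i, y₀) ∈ SEz R z ∧ (g i, y₁) ∈ SEz R z) → S.Finite) ∧
  (∀ z ∈ NWreg R, ∀ (S : Set ℤ) (h : ℤ → X₂) (x₀ x₁ : X₁),
    StdSeq2 R S h x₀ x₁ → BoundedSeq2 R S h x₀ →
    (∀ i ∈ S, (x₀, h i) ∈ NWz R z ∧ (x₁, h i) ∈ NWz R z) → S.Finite) ∧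
  (∀ z ∈ SEreg R, ∀ (S : Set ℤ) (h : ℤ → X₂) (x₀ x₁ : X₁),
    StdSeq2 R S h x₀ x₁ → BoundedSeq2 R S h x₀ →
    (∀ i ∈ S, (x₀, h i) ∈ SEz R z ∧ (x₁, h i) ∈ SEz R z) → S.Finite)

/-- Structural assumption. -/
def Structural (R : X₁ × X₂ → X₁ × X₂ → Prop) : Prop :=
  (∀ a b : X₁, a ≠ b → ¬ ∀ p : X₂, IP R (a,p) (b,p)) ∧
  (∀ p q : X₂, p ≠ q → ¬ ∀ a : X₁, IP R (a,p) (a,q))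

/-- Order density. -/
def OrderDense (R : X₁ × X₂ → X₁ × X₂ → Prop) : Prop :=
  ∀ x y : X₁ × X₂, SP R x y → ∃ z : X₁ × X₂, SP R x z ∧ SP R z y

/-- Closedness of SE and NW. -/
def Closedness (R : X₁ × X₂ → X₁ × X₂ → Prop) : Prop :=
  (∀ a b : X₁, ∀ p : X₂, (a,p) ∉ NWreg R → (b,p) ∉ SEreg R →
    ∃ c : X₁, (c,p) ∈ Theta R) ∧
  (∀ a : X₁, ∀ p q : X₂, (a,p) ∉ NWreg R → (a,q) ∉ SEreg R →
    ∃ r : X₂, (a,r) ∈ Theta R)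

/-- A capacity on the two-element set (coordinate 1 ↦ `0`, coordinate 2 ↦ `1`). -/
structure Capacity where
  ν : Set (Fin 2) → ℝ
  empty' : ν ∅ = 0
  mono' : ∀ A B : Set (Fin 2), A ⊆ B → ν A ≤ ν B
  norm' : ν Set.univ = 1

/-- Two-point Choquet integral. -/
noncomputable def Choq (c : Capacity) (t₁ t₂ : ℝ) : ℝ :=
  if t₂ ≤ t₁ then c.ν {0} * t₁ + (1 - c.ν {0}) * t₂
  else (1 - c.ν {1}) * t₁ + c.ν {1} * t₂

/-- `ν` together with `(f₁, f₂)` represents `R`. -/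
def Represents (c : Capacity) (f₁ : X₁ → ℝ) (f₂ : X₂ → ℝ)
    (R : X₁ × X₂ → X₁ × X₂ → Prop) : Prop :=
  ∀ x y : X₁ × X₂, R x y ↔ Choq c (f₁ y.1) (f₂ y.2) ≤ Choq c (f₁ x.1) (f₂ x.2)

/-- `(V₁, V₂)` additively represents `R` on `A`. -/
def AddRep (R : X₁ × X₂ → X₁ × X₂ → Prop) (V₁ : X₁ → ℝ) (V₂ : X₂ → ℝ)
    (A : Set (X₁ × X₂)) : Prop :=
  ∀ x ∈ A, ∀ y ∈ A, (R x y ↔ V₁ y.1 + V₂ y.2 ≤ V₁ x.1 + V₂ x.2)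

/-- `Φ` represents `R` on `A`. -/
def RepOn (R : X₁ × X₂ → X₁ × X₂ → Prop) (Φ : X₁ × X₂ → ℝ) (A : Set (X₁ × X₂)) : Prop :=
  ∀ x ∈ A, ∀ y ∈ A, (R x y ↔ Φ y ≤ Φ x)


/-- `S` union of non-extreme SE cones. -/
def SEstar (R : X₁ × X₂ → X₁ × X₂ → Prop) : Set (X₁ × X₂) :=
  ⋃ z ∈ Theta R \ SEext R, SEz R z

/-- Union of non-extreme NW cones. -/
def NWstar (R : X₁ × X₂ → X₁ × X₂ → Prop) : Set (X₁ × X₂) :=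
  ⋃ z ∈ Theta R \ NWext R, NWz R z

/-- First coordinates appearing both in `SEstar` and `NWstar`. -/
def D1 (R : X₁ × X₂ → X₁ × X₂ → Prop) : Set X₁ :=
  {a | (∃ p : X₂, (a,p) ∈ SEstar R) ∧ (∃ q : X₂, (a,q) ∈ NWstar R)}

/-- Second coordinates appearing both in `SEstar` and `NWstar`. -/
def D2 (R : X₁ × X₂ → X₁ × X₂ → Prop) : Set X₂ :=
  {p | (∃ a : X₁, (a,p) ∈ SEstar R) ∧ (∃ b : X₁, (b,p) ∈ NWstar R)}

end ChoquetAxioms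

/-!
Write `m` for the column `p` of the theorem. Unless the strip degenerates (`a₀` minimal, `b₀`
maximal, or `m` extreme, where the claim is immediate), `a₀m ∈ NW` and `b₀m ∈ SE` give triple
cancellation on the half-strips `NWz (a₀,m)` and `SEz (b₀,m)`, which lie in NW and SE. With A4
this gives every instance in the strip whose two column pairs each lie on one side of `m`.

The other instances are reduced to these by restricted solvability inside the strip. If `r, s`
straddle `m`, the values `ar`, `cr` (and `bs`, `ds`) are carried to rows meeting column `m` at the
same level. If `p, q` straddle `m`, the instance is cut at `m`: given rows `e, f` with `em ∼ bq`,
`fm ∼ dq` and a column `v` with `ev ∼ bs`, it follows from the instances for the pairs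
`(p,m), (r,v)` on rows `a, e, c, f` and `(m,q), (v,s)` on rows `e, b, f, d`, whose first pairs do
not straddle `m`. When no such `v` exists, the cut goes through `ap` and `cp` instead, or the
instance degenerates.
-/

section Strip

variable {X₁ X₂ : Type*} {R : X₁ × X₂ → X₁ × X₂ → Prop}

theorem A1.refl (h1 : A1 R) (x : X₁ × X₂) : R x x := (h1.1 x x).elim id id

theorem A1.trans (h1 : A1 R) {x y z : X₁ × X₂} (hxy : R x y) (hyz : R y z) : R x z :=
  h1.2 x y z hxy hyz

theorem A1.of_not (h1 : A1 R) {x y : X₁ × X₂} (h : ¬ R x y) : R y x :=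
  (h1.1 x y).resolve_left h

theorem ge1_refl (h1 : A1 R) (a : X₁) : Ge1 R a a := fun _ => h1.refl _

theorem ge2_refl (h1 : A1 R) (p : X₂) : Ge2 R p p := fun _ => h1.refl _

theorem ge1_trans (h1 : A1 R) {a b c : X₁} (hab : Ge1 R a b) (hbc : Ge1 R b c) : Ge1 R a c :=
  fun t => h1.trans (hab t) (hbc t)

theorem ge2_trans (h1 : A1 R) {p q r : X₂} (hpq : Ge2 R p q) (hqr : Ge2 R q r) : Ge2 R p r :=
  fun x => h1.trans (hpq x) (hqr x)

theorem ge1_total (h1 : A1 R) (h2 : A2 R) (a b : X₁) : Ge1 R a b ∨ Ge1 R b a := by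
  by_cases h : Ge1 R a b
  · exact .inl h
  · obtain ⟨t, ht⟩ := not_forall.1 h
    exact .inr (h2.1 b a t ⟨h1.of_not ht, ht⟩)

theorem ge2_total (h1 : A1 R) (h2 : A2 R) (p q : X₂) : Ge2 R p q ∨ Ge2 R q p := by
  by_cases h : Ge2 R p q
  · exact .inl h
  · obtain ⟨x, hx⟩ := not_forall.1 h
    exact .inr (h2.2 q p x ⟨h1.of_not hx, hx⟩)

theorem exists_ip_ge2 (h1 : A1 R) (h2 : A2 R) (h8 : A8 R) {e : X₁} {t m : X₂} {y : X₁ × X₂}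
    (ht : R (e,t) y) (hy : R y (e,m)) : ∃ v, Ge2 R v m ∧ IP R (e,v) y := by
  obtain ⟨v, hv⟩ := h8.1 e t m y ht hy
  rcases ge2_total h1 h2 v m with hvm | hmv
  · exact ⟨v, hvm, hv⟩
  · exact ⟨m, ge2_refl h1 m, h1.trans (hmv e) hv.1, hy⟩

theorem A1.dual (h1 : A1 R) : A1 (flip R) :=
  ⟨fun x y => h1.1 y x, fun x y z hxy hyz => h1.2 z y x hyz hxy⟩

theorem A2.dual (h2 : A2 R) : A2 (flip R) :=
  ⟨fun a b t hab q => h2.1 b a t hab q, fun p q a hpq b => h2.2 q p a hpq b⟩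

theorem A8.dual (h8 : A8 R) : A8 (flip R) := by
  refine ⟨fun a p r y hpy hyr => ?_, fun p a c y hay hyc => ?_⟩
  · obtain ⟨b, hb⟩ := h8.1 a r p y hyr hpy
    exact ⟨b, hb.2, hb.1⟩
  · obtain ⟨b, hb⟩ := h8.2 p c a y hyc hay
    exact ⟨b, hb.2, hb.1⟩

theorem TCancel.mono {A B : Set (X₁ × X₂)} (h : TCancel R A) (hBA : B ⊆ A) : TCancel R B :=
  fun a b c d p q r s hap hbq har hbs hcp hdq hcr hds =>
    h a b c d p q r s (hBA hap) (hBA hbq) (hBA har) (hBA hbs) (hBA hcp) (hBA hdq) (hBA hcr)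
      (hBA hds)

theorem tcancel_of_forall_ge1 (h1 : A1 R) {A : Set (X₁ × X₂)}
    (hA : ∀ x ∈ A, ∀ y ∈ A, Ge1 R x.1 y.1) : TCancel R A :=
  fun _ _ _ _ _ _ r s _ _ har hbs _ _ hcr hds _ hab _ =>
    h1.trans (hA _ hcr _ har r) (h1.trans hab (hA _ hbs _ hds s))

theorem tcancel_of_forall_ge2 (h1 : A1 R) {A : Set (X₁ × X₂)}
    (hA : ∀ x ∈ A, ∀ y ∈ A, Ge2 R x.2 y.2) : TCancel R A :=
  fun _ _ c d _ _ _ _ _ _ _ _ hcp hdq hcr hds _ _ hcd =>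
    h1.trans (hA _ hcr _ hcp c) (h1.trans hcd (hA _ hdq _ hds d))

def TCancelAt (R : X₁ × X₂ → X₁ × X₂ → Prop) (a b c d : X₁) (p q r s : X₂) : Prop :=
  R (b,q) (a,p) → R (a,r) (b,s) → R (c,p) (d,q) → R (c,r) (d,s)

def SameSide (R : X₁ × X₂ → X₁ × X₂ → Prop) (m p q : X₂) : Prop :=
  Ge2 R p m ∧ Ge2 R q m ∨ Ge2 R m p ∧ Ge2 R m q

def TCancelSplit (R : X₁ × X₂ → X₁ × X₂ → Prop) (S : Set X₁) (m : X₂) : Prop :=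
  ∀ ⦃a b c d : X₁⦄ ⦃p q r s : X₂⦄, a ∈ S → b ∈ S → c ∈ S → d ∈ S →
    SameSide R m p q → SameSide R m r s → TCancelAt R a b c d p q r s

def SolvableAt (R : X₁ × X₂ → X₁ × X₂ → Prop) (S : Set X₁) (m : X₂) : Prop :=
  ∀ u ∈ S, ∀ v ∈ S, ∀ y, R (u,m) y → R y (v,m) → ∃ e ∈ S, IP R (e,m) y

variable {S : Set X₁} {m : X₂} {a b c d : X₁} {p q r s : X₂}

theorem SameSide.above (hp : Ge2 R p m) (hq : Ge2 R q m) : SameSide R m p q :=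
  .inl ⟨hp, hq⟩

theorem SameSide.below (hp : Ge2 R m p) (hq : Ge2 R m q) : SameSide R m p q :=
  .inr ⟨hp, hq⟩

theorem SameSide.of_dual (h : SameSide (flip R) m p q) : SameSide R m q p := by
  rcases h with ⟨hp, hq⟩ | ⟨hp, hq⟩
  exacts [.below hq hp, .above hq hp]

theorem sameSide_base_left (h1 : A1 R) (h2 : A2 R) : SameSide R m m q :=
  (ge2_total h1 h2 q m).elim (.above (ge2_refl h1 m)) (.below (ge2_refl h1 m))

theorem sameSide_base_right (h1 : A1 R) (h2 : A2 R) : SameSide R m p m :=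
  (ge2_total h1 h2 p m).elim (.above · (ge2_refl h1 m)) (.below · (ge2_refl h1 m))

/-- In the dual order an instance reads with `a ↔ b`, `c ↔ d`, `p ↔ q`, `r ↔ s`:
`TCancelAt (flip R) b a d c q p s r` is `TCancelAt R a b c d p q r s` by definition. -/
theorem TCancelSplit.dual (h : TCancelSplit R S m) : TCancelSplit (flip R) S m :=
  fun _ _ _ _ _ _ _ _ ha hb hc hd hpq hrs => h hb ha hd hc hpq.of_dual hrs.of_dual

theorem SolvableAt.dual (hS : SolvableAt R S m) : SolvableAt (flip R) S m := by
  intro u hu v hv y huy hyv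
  obtain ⟨e, he, hey⟩ := hS v hv u hu y hyv huy
  exact ⟨e, he, hey.2, hey.1⟩

theorem SolvableAt.exists_ge1 (hS : SolvableAt R S m) (h1 : A1 R) (h2 : A2 R) {u b : X₁}
    {y : X₁ × X₂} (hu : u ∈ S) (hb : b ∈ S) (huy : R (u,m) y) (hyb : R y (b,m)) :
    ∃ e ∈ S, IP R (e,m) y ∧ Ge1 R e b := by
  obtain ⟨e, he, hey⟩ := hS u hu b hb y huy hyb
  rcases ge1_total h1 h2 e b with heb | hbe
  · exact ⟨e, he, hey, heb⟩
  · exact ⟨b, hb, ⟨h1.trans (hbe m) hey.1, hyb⟩, ge1_refl h1 b⟩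

theorem SolvableAt.exists_le1 (hS : SolvableAt R S m) (h1 : A1 R) (h2 : A2 R) {b v : X₁}
    {y : X₁ × X₂} (hb : b ∈ S) (hv : v ∈ S) (hby : R (b,m) y) (hyv : R y (v,m)) :
    ∃ e ∈ S, IP R (e,m) y ∧ Ge1 R b e := by
  obtain ⟨e, he, hey⟩ := hS b hb v hv y hby hyv
  rcases ge1_total h1 h2 b e with hbe | heb
  · exact ⟨e, he, hey, hbe⟩
  · exact ⟨b, hb, ⟨hby, h1.trans hey.2 (heb m)⟩, ge1_refl h1 b⟩

structure SplitSetting (R : X₁ × X₂ → X₁ × X₂ → Prop) (S : Set X₁) (m : X₂) : Prop where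
  weakOrder : A1 R
  separable : A2 R
  solvable : A8 R
  solvableAt : SolvableAt R S m
  split : TCancelSplit R S m

namespace SplitSetting

theorem dual (H : SplitSetting R S m) : SplitSetting (flip R) S m :=
  ⟨H.weakOrder.dual, H.separable.dual, H.solvable.dual, H.solvableAt.dual, H.split.dual⟩

theorem tcancelAt_of_s_below (H : SplitSetting R S m) (ha : a ∈ S) (hb : b ∈ S) (hc : c ∈ S)
    (hd : d ∈ S) (hp : Ge2 R p m) (hq : Ge2 R q m) (hr : Ge2 R r m) (hs : Ge2 R m s) :
    TCancelAt R a b c d p q r s := by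
  intro hbq har hcp
  have ⟨h1, h2, h8, hS, hsplit⟩ := H
  have hm := ge2_refl h1 m
  by_cases harm : R (a,r) (b,m)
  · exact h1.trans (hsplit ha hb hc hd (.above hp hq) (.above hr hm) hbq harm hcp) (hs d)
  by_cases hams : R (a,m) (b,s)
  · exact h1.trans (hr c) (hsplit ha hb hc hd (.above hp hq) (.below hm hs) hbq hams hcp)
  by_cases hcrm : R (c,r) (d,m)
  · exact h1.trans hcrm (hs d)
  obtain ⟨e, he, hem⟩ := hS b hb a ha (a,r) (h1.of_not harm) (hr a)
  obtain ⟨f, hf, hfm⟩ := hS d hd c hc (c,r) (h1.of_not hcrm) (hr c)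
  have hfv : ∀ {v}, Ge2 R v m → R (e,v) (a,p) → R (f,v) (c,p) := fun hv hev =>
    hsplit he ha hf hc (.above hm hr) (.above hv hp) hem.2 hev hfm.1
  by_cases heap : R (e,m) (a,p)
  · exact h1.trans hfm.2 (h1.trans (hfv hm heap) (h1.trans hcp (h1.trans (hq d) (hs d))))
  by_cases hreach : ∃ t, R (e,t) (a,p)
  · obtain ⟨t, ht⟩ := hreach
    obtain ⟨v, hv, hev⟩ := exists_ip_ge2 h1 h2 h8 ht (h1.of_not heap)
    exact h1.trans hfm.2 (hsplit he hb hf hd (.above hv hq) (.below hm hs)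
      (h1.trans hbq hev.2) (h1.trans hem.1 har) (h1.trans (hfv hv hev.1) hcp))
  · push Not at hreach
    have hae : Ge1 R a e := h2.1 a e p ⟨h1.of_not (hreach p), hreach p⟩
    exact absurd (h1.trans (hae m) (h1.trans hem.1 har)) hams

theorem tcancelAt_of_r_below (H : SplitSetting R S m) (ha : a ∈ S) (hb : b ∈ S) (hc : c ∈ S)
    (hd : d ∈ S) (hp : Ge2 R p m) (hq : Ge2 R q m) (hr : Ge2 R m r) (hs : Ge2 R s m) :
    TCancelAt R a b c d p q r s := by
  intro hbq har hcp
  have ⟨h1, h2, h8, hS, hsplit⟩ := H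
  have hm := ge2_refl h1 m
  have hcrm : R (c,r) (d,m) :=
    hsplit ha hb hc hd (.above hp hq) (.below hr hm) hbq (h1.trans har (hs b)) hcp
  have hcms : R (c,m) (d,s) :=
    hsplit ha hb hc hd (.above hp hq) (.above hm hs) hbq (h1.trans (hr a) har) hcp
  by_cases hbqs : R (b,q) (b,s)
  swap
  · have harm : R (a,r) (a,m) := h1.trans har (h1.trans (h1.of_not hbqs) (h1.trans hbq (hp a)))
    exact h1.trans (hsplit ha ha hc hc (.below hm hm) (.below hr hm) (h1.refl _) harm (h1.refl _))
      hcms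
  obtain ⟨e, he, hem⟩ := hS a ha b hb (a,r) (hr a) (h1.trans har (hs b))
  by_cases hreach : ∃ t, R (e,t) (a,p)
  swap
  · push Not at hreach
    have hbe : Ge1 R b e :=
      h2.1 b e q ⟨h1.trans hbq (h1.of_not (hreach q)), fun h => hreach q (h1.trans h hbq)⟩
    exact h1.trans hcrm (hsplit hb hb hd hd (.above hm hm) (.above hm hs) (h1.refl _)
      (h1.trans (hbe m) (h1.trans hem.1 har)) (h1.refl _))
  obtain ⟨t, ht⟩ := hreach
  obtain ⟨v, hv, hev⟩ := exists_ip_ge2 h1 h2 h8 ht (h1.trans (hp a) (h1.trans (hr a) hem.2))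
  obtain ⟨e', he', he'm, he'b⟩ := hS.exists_ge1 h1 h2 ha hb (h1.trans (hr a) har) (hs b)
  obtain ⟨v', hv', he'v'⟩ := exists_ip_ge2 h1 h2 h8 (he'b q) (h1.trans hbqs he'm.2)
  obtain ⟨f, hf, hfm⟩ := hS c hc d hd (c,r) (hr c) hcrm
  obtain ⟨f', hf', hf'm⟩ := hS c hc d hd (d,s) hcms (hs d)
  have hfv : R (f,v) (c,p) := hsplit he ha hf hc (.below hm hr) (.above hv hp) hem.2 hev.1 hfm.1
  have hf'v' : R (d,q) (f',v') :=
    hsplit hb he' hd hf' (.above hs hm) (.above hq hv') he'm.1 he'v'.2 hf'm.2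
  have hff' : R (f,m) (f',m) := hsplit he he' hf hf' (.above hv hv') (.above hm hm)
    (h1.trans he'v'.1 (h1.trans hbq hev.2)) (h1.trans hem.1 (h1.trans har he'm.2))
    (h1.trans hfv (h1.trans hcp hf'v'))
  exact h1.trans hfm.2 (h1.trans hff' hf'm.1)

theorem tcancelAt_of_above (H : SplitSetting R S m) (ha : a ∈ S) (hb : b ∈ S) (hc : c ∈ S)
    (hd : d ∈ S) (hp : Ge2 R p m) (hq : Ge2 R q m) : TCancelAt R a b c d p q r s := by
  have h1 := H.weakOrder
  have h2 := H.separable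
  rcases ge2_total h1 h2 r m with hr | hr <;> rcases ge2_total h1 h2 s m with hs | hs
  · exact H.split ha hb hc hd (.above hp hq) (.above hr hs)
  · exact H.tcancelAt_of_s_below ha hb hc hd hp hq hr hs
  · exact H.tcancelAt_of_r_below ha hb hc hd hp hq hr hs
  · exact H.split ha hb hc hd (.above hp hq) (.below hr hs)

theorem tcancelAt_of_sameSide (H : SplitSetting R S m) (ha : a ∈ S) (hb : b ∈ S) (hc : c ∈ S)
    (hd : d ∈ S) (hpq : SameSide R m p q) : TCancelAt R a b c d p q r s := by
  rcases hpq with ⟨hp, hq⟩ | ⟨hp, hq⟩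
  · exact H.tcancelAt_of_above ha hb hc hd hp hq
  · exact H.dual.tcancelAt_of_above hb ha hd hc hq hp

theorem tcancelAt_of_ip_b (H : SplitSetting R S m) (ha : a ∈ S) (hb : b ∈ S) (hc : c ∈ S)
    (hd : d ∈ S) {e f : X₁} {v : X₂} (he : e ∈ S) (hf : f ∈ S) (hem : IP R (e,m) (b,q))
    (hev : IP R (e,v) (b,s)) (hfm : IP R (f,m) (d,q)) : TCancelAt R a b c d p q r s := by
  intro hbq har hcp
  have h1 := H.weakOrder
  have h2 := H.separable
  have hcr : R (c,r) (f,v) := H.tcancelAt_of_sameSide ha he hc hf (sameSide_base_right h1 h2)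
    (h1.trans hem.1 hbq) (h1.trans har hev.2) (h1.trans hcp hfm.2)
  exact h1.trans hcr
    (H.tcancelAt_of_sameSide he hb hf hd (sameSide_base_left h1 h2) hem.2 hev.1 hfm.1)

theorem tcancelAt_of_ip_a (H : SplitSetting R S m) (ha : a ∈ S) (hb : b ∈ S) (hc : c ∈ S)
    (hd : d ∈ S) {e f : X₁} {v : X₂} (he : e ∈ S) (hf : f ∈ S) (hem : IP R (e,m) (a,p))
    (hev : IP R (e,v) (a,r)) (hfm : IP R (f,m) (c,p)) : TCancelAt R a b c d p q r s := by
  intro hbq har hcp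
  have h1 := H.weakOrder
  have h2 := H.separable
  have hcr : R (c,r) (f,v) :=
    H.tcancelAt_of_sameSide ha he hc hf (sameSide_base_right h1 h2) hem.1 hev.2 hfm.2
  exact h1.trans hcr (H.tcancelAt_of_sameSide he hb hf hd (sameSide_base_left h1 h2)
    (h1.trans hbq hem.2) (h1.trans hev.1 har) (h1.trans hfm.1 hcp))

theorem tcancelAt_of_above_below (H : SplitSetting R S m) (ha : a ∈ S) (hb : b ∈ S)
    (hc : c ∈ S) (hd : d ∈ S) (hp : Ge2 R p m) (hq : Ge2 R m q) :
    TCancelAt R a b c d p q r s := by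
  intro hbq har hcp
  have ⟨h1, h2, h8, hS, _⟩ := H
  have hbqm : R (b,q) (a,m) := h1.trans hbq (hp a)
  by_cases hcm : R (c,m) (d,q)
  · exact H.tcancelAt_of_sameSide ha hb hc hd (sameSide_base_left h1 h2) hbqm har hcm
  obtain ⟨f, hf, hfm⟩ := hS d hd c hc (d,q) (hq d) (h1.of_not hcm)
  obtain ⟨e, he, hem, v, hev⟩ : ∃ e ∈ S, IP R (e,m) (b,q) ∧ ∃ v, IP R (e,v) (b,s) := by
    obtain ⟨e, he, hem, hbe⟩ := hS.exists_le1 h1 h2 hb ha (hq b) hbqm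
    by_cases hreach : ∃ t, R (e,t) (b,s)
    · obtain ⟨t, ht⟩ := hreach
      exact ⟨e, he, hem, h8.1 e t s (b,s) ht (hbe s)⟩
    push Not at hreach
    -- then `a ≽₁ e`, so `am ∼ bq`, and row `a` or row `b` does the job
    have hae : Ge1 R a e :=
      h2.1 a e r ⟨h1.trans har (h1.of_not (hreach r)), fun h => hreach r (h1.trans h har)⟩
    have ham : IP R (a,m) (b,q) := ⟨h1.trans (hae m) hem.1, hbqm⟩
    rcases ge1_total h1 h2 b a with hba | hab
    · exact ⟨a, ha, ham, h8.1 a r s (b,s) har (hba s)⟩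
    · exact ⟨b, hb, ⟨hq b, h1.trans hbqm (hab m)⟩, s, h1.refl _, h1.refl _⟩
  exact H.tcancelAt_of_ip_b ha hb hc hd he hf hem hev hfm hbq har hcp

theorem tcancelAt_of_below_above (H : SplitSetting R S m) (ha : a ∈ S) (hb : b ∈ S)
    (hc : c ∈ S) (hd : d ∈ S) (hp : Ge2 R m p) (hq : Ge2 R q m) :
    TCancelAt R a b c d p q r s := by
  intro hbq har hcp
  have ⟨h1, h2, h8, hS, _⟩ := H
  have hcpm : R (c,p) (d,m) := h1.trans hcp (hq d)
  have hcmq : R (c,m) (d,q) := h1.trans (hp c) hcp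
  by_cases hbm : R (b,m) (a,p)
  · exact H.tcancelAt_of_sameSide ha hb hc hd (sameSide_base_right h1 h2) hbm har hcpm
  by_cases hbqm : R (b,q) (a,m)
  · exact H.tcancelAt_of_sameSide ha hb hc hd (sameSide_base_left h1 h2) hbqm har hcmq
  obtain ⟨e, he, hem, heb⟩ := hS.exists_ge1 h1 h2 ha hb (h1.of_not hbqm) (hq b)
  by_cases hreach : ∃ t, R (b,s) (e,t)
  · obtain ⟨t, ht⟩ := hreach
    obtain ⟨v, hev⟩ := h8.1 e s t (b,s) (heb s) ht
    obtain ⟨f, hf, hfm⟩ := hS c hc d hd (d,q) hcmq (hq d)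
    exact H.tcancelAt_of_ip_b ha hb hc hd he hf hem hev hfm hbq har hcp
  push Not at hreach
  have hqs : Ge2 R q s :=
    h2.2 q s b ⟨h1.trans hem.2 (h1.of_not (hreach m)), fun h => hreach m (h1.trans h hem.2)⟩
  rcases ge2_total h1 h2 r p with hrp | hpr
  · exact h1.trans (hrp c) (h1.trans hcp (hqs d))
  obtain ⟨e, he, hem⟩ := hS a ha b hb (a,p) (hp a) (h1.of_not hbm)
  obtain ⟨f, hf, hfm⟩ := hS c hc d hd (c,p) (hp c) hcpm
  by_cases hreach : ∃ t, R (a,r) (e,t)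
  · obtain ⟨t, ht⟩ := hreach
    obtain ⟨v, hev⟩ := h8.1 e m t (a,r) (h1.trans hem.1 (hpr a)) ht
    exact H.tcancelAt_of_ip_a ha hb hc hd he hf hem hev hfm hbq har hcp
  push Not at hreach
  have hea : Ge1 R e a := h2.1 e a r ⟨h1.of_not (hreach r), hreach r⟩
  exact absurd (h1.trans hbq (h1.trans hem.2 (hea m))) hbqm

theorem tcancel (H : SplitSetting R S m) : TCancel R {x | x.1 ∈ S} := by
  intro a b c d p q r s ha hb _ _ hc hd _ _
  have h1 := H.weakOrder
  have h2 := H.separable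
  rcases ge2_total h1 h2 p m with hp | hp <;> rcases ge2_total h1 h2 q m with hq | hq
  · exact H.tcancelAt_of_sameSide ha hb hc hd (.above hp hq)
  · exact H.tcancelAt_of_above_below ha hb hc hd hp hq
  · exact H.tcancelAt_of_below_above ha hb hc hd hp hq
  · exact H.tcancelAt_of_sameSide ha hb hc hd (.below hp hq)

end SplitSetting

theorem nwz_subset_nwz (h1 : A1 R) {x z : X₁ × X₂} (hx : x ∈ NWz R z) : NWz R x ⊆ NWz R z :=
  fun _ hy => ⟨ge2_trans h1 hy.1 hx.1, ge1_trans h1 hx.2 hy.2⟩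

theorem sez_subset_sez (h1 : A1 R) {x z : X₁ × X₂} (hx : x ∈ SEz R z) : SEz R x ⊆ SEz R z :=
  fun _ hy => ⟨ge1_trans h1 hy.1 hx.1, ge2_trans h1 hx.2 hy.2⟩

theorem tcancel_nwz_or_of_mem_nwreg (h1 : A1 R) {x : X₁ × X₂} (hx : x ∈ NWreg R) :
    (TCancel R (NWz R x) ∧ NWz R x ⊆ NWreg R) ∨ Min1 R x.1 ∨ Max2 R x.2 := by
  rcases hx with ⟨z, hz1, hz2, hz, hxz⟩ | ⟨hext, -⟩
  · have hsub := nwz_subset_nwz h1 hxz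
    exact .inl ⟨hz.mono hsub, fun y hy => .inl ⟨z, hz1, hz2, hz, hsub hy⟩⟩
  · exact .inr hext

theorem tcancel_sez_or_of_mem_sereg (h1 : A1 R) {x : X₁ × X₂} (hx : x ∈ SEreg R) :
    (TCancel R (SEz R x) ∧ SEz R x ⊆ SEreg R) ∨ Max1 R x.1 ∨ Min2 R x.2 := by
  rcases hx with ⟨z, hz1, hz2, hz, hxz⟩ | ⟨hext, -⟩
  · have hsub := sez_subset_sez h1 hxz
    exact .inl ⟨hz.mono hsub, fun y hy => .inl ⟨z, hz1, hz2, hz, hsub hy⟩⟩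
  · exact .inr hext

variable {a₀ b₀ : X₁}

/-- When A4 does not apply, points of NW in a common column are indifferent, so replacing `p, q`
by `m` gives an instance inside the lower half-strip. -/
theorem tcancelAt_of_nwz_sez (h1 : A1 R) (h4 : A4 R)
    (hN : TCancel R (NWz R (a₀,m)) ∧ NWz R (a₀,m) ⊆ NWreg R)
    (hS : TCancel R (SEz R (b₀,m)) ∧ SEz R (b₀,m) ⊆ SEreg R)
    (ha : Ge1 R a₀ a ∧ Ge1 R a b₀) (hb : Ge1 R a₀ b ∧ Ge1 R b b₀)
    (hc : Ge1 R a₀ c ∧ Ge1 R c b₀) (hd : Ge1 R a₀ d ∧ Ge1 R d b₀)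
    (hp : Ge2 R p m) (hq : Ge2 R q m) (hr : Ge2 R m r) (hs : Ge2 R m s) :
    TCancelAt R a b c d p q r s := by
  have hN' : ∀ {x t}, Ge1 R a₀ x → Ge2 R t m → (x,t) ∈ NWreg R := fun hx ht => hN.2 ⟨ht, hx⟩
  have hS' : ∀ {x t}, Ge1 R x b₀ → Ge2 R m t → (x,t) ∈ SEreg R := fun hx ht => hS.2 ⟨hx, ht⟩
  by_cases hess : Ess1 R (NWreg R)
  · exact h4 a b c d p q r s (.inr (.inr (.inr (.inr (.inl
      ⟨⟨hN' ha.1 hp, hN' hb.1 hq, hN' hc.1 hp, hN' hd.1 hq⟩, hess,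
        ⟨hS' ha.2 hr, hS' hb.2 hs, hS' hc.2 hr, hS' hd.2 hs⟩⟩)))))
  have hm := ge2_refl h1 m
  have htie : ∀ {x y}, Ge1 R a₀ x → Ge1 R a₀ y → R (x,m) (y,m) := fun {x y} hx hy =>
    of_not_not fun h => hess ⟨y, x, m, hN' hy hm, hN' hx hm, h1.of_not h, h⟩
  intro _ har _
  exact hS.1 a b c d m m r s ⟨ha.2, hm⟩ ⟨hb.2, hm⟩ ⟨ha.2, hr⟩ ⟨hb.2, hs⟩ ⟨hc.2, hm⟩ ⟨hd.2, hm⟩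
    ⟨hc.2, hr⟩ ⟨hd.2, hs⟩ (htie hb.1 ha.1) har (htie hc.1 hd.1)

theorem tcancelAt_of_sez_nwz (h1 : A1 R) (h4 : A4 R)
    (hN : TCancel R (NWz R (a₀,m)) ∧ NWz R (a₀,m) ⊆ NWreg R)
    (hS : TCancel R (SEz R (b₀,m)) ∧ SEz R (b₀,m) ⊆ SEreg R)
    (ha : Ge1 R a₀ a ∧ Ge1 R a b₀) (hb : Ge1 R a₀ b ∧ Ge1 R b b₀)
    (hc : Ge1 R a₀ c ∧ Ge1 R c b₀) (hd : Ge1 R a₀ d ∧ Ge1 R d b₀)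
    (hp : Ge2 R m p) (hq : Ge2 R m q) (hr : Ge2 R r m) (hs : Ge2 R s m) :
    TCancelAt R a b c d p q r s := by
  have hN' : ∀ {x t}, Ge1 R a₀ x → Ge2 R t m → (x,t) ∈ NWreg R := fun hx ht => hN.2 ⟨ht, hx⟩
  have hS' : ∀ {x t}, Ge1 R x b₀ → Ge2 R m t → (x,t) ∈ SEreg R := fun hx ht => hS.2 ⟨hx, ht⟩
  by_cases hess : Ess1 R (SEreg R)
  · exact h4 a b c d p q r s (.inr (.inr (.inr (.inr (.inr
      ⟨⟨hS' ha.2 hp, hS' hb.2 hq, hS' hc.2 hp, hS' hd.2 hq⟩, hess,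
        ⟨hN' ha.1 hr, hN' hb.1 hs, hN' hc.1 hr, hN' hd.1 hs⟩⟩)))))
  have hm := ge2_refl h1 m
  have htie : ∀ {x y}, Ge1 R x b₀ → Ge1 R y b₀ → R (x,m) (y,m) := fun {x y} hx hy =>
    of_not_not fun h => hess ⟨y, x, m, hS' hy hm, hS' hx hm, h1.of_not h, h⟩
  intro _ har _
  exact hN.1 a b c d m m r s ⟨hm, ha.1⟩ ⟨hm, hb.1⟩ ⟨hr, ha.1⟩ ⟨hs, hb.1⟩ ⟨hm, hc.1⟩ ⟨hm, hd.1⟩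
    ⟨hr, hc.1⟩ ⟨hs, hd.1⟩ (htie hb.2 ha.2) har (htie hc.2 hd.2)

theorem tcancelSplit_strip (h1 : A1 R) (h4 : A4 R)
    (hN : TCancel R (NWz R (a₀,m)) ∧ NWz R (a₀,m) ⊆ NWreg R)
    (hS : TCancel R (SEz R (b₀,m)) ∧ SEz R (b₀,m) ⊆ SEreg R) :
    TCancelSplit R {x | Ge1 R a₀ x ∧ Ge1 R x b₀} m := by
  intro a b c d p q r s ha hb hc hd hpq hrs
  rcases hpq with ⟨hp, hq⟩ | ⟨hp, hq⟩ <;> rcases hrs with ⟨hr, hs⟩ | ⟨hr, hs⟩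
  · exact hN.1 a b c d p q r s ⟨hp, ha.1⟩ ⟨hq, hb.1⟩ ⟨hr, ha.1⟩ ⟨hs, hb.1⟩ ⟨hp, hc.1⟩
      ⟨hq, hd.1⟩ ⟨hr, hc.1⟩ ⟨hs, hd.1⟩
  · exact tcancelAt_of_nwz_sez h1 h4 hN hS ha hb hc hd hp hq hr hs
  · exact tcancelAt_of_sez_nwz h1 h4 hN hS ha hb hc hd hp hq hr hs
  · exact hS.1 a b c d p q r s ⟨ha.2, hp⟩ ⟨hb.2, hq⟩ ⟨ha.2, hr⟩ ⟨hb.2, hs⟩ ⟨hc.2, hp⟩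
      ⟨hd.2, hq⟩ ⟨hc.2, hr⟩ ⟨hd.2, hs⟩

theorem solvableAt_strip (h1 : A1 R) (h2 : A2 R) (h8 : A8 R) (hab : Ge1 R a₀ b₀) (m : X₂) :
    SolvableAt R {x | Ge1 R a₀ x ∧ Ge1 R x b₀} m := by
  intro u hu v hv y huy hyv
  obtain ⟨e, he⟩ := h8.2 m u v y huy hyv
  rcases ge1_total h1 h2 a₀ e with hae | hea
  · rcases ge1_total h1 h2 e b₀ with heb | hbe
    · exact ⟨e, ⟨hae, heb⟩, he⟩
    · exact ⟨b₀, ⟨hab, ge1_refl h1 b₀⟩, h1.trans (hbe m) he.1, h1.trans hyv (hv.2 m)⟩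
  · exact ⟨a₀, ⟨ge1_refl h1 a₀, hab⟩, h1.trans (hu.1 m) huy, h1.trans he.2 (hea m)⟩

end Strip

theorem tripleCancel_on_strip_general {X₁ X₂ : Type*}
    (R : X₁ × X₂ → X₁ × X₂ → Prop)
    (h1 : A1 R) (h2 : A2 R) (h4 : A4 R) (h8 : A8 R)
    (a₀ b₀ : X₁) (hab : Ge1 R a₀ b₀) (p : X₂)
    (ha : (a₀, p) ∈ Theta R) (hb : (b₀, p) ∈ Theta R) :
    TCancel R {x : X₁ × X₂ | Ge1 R a₀ x.1 ∧ Ge1 R x.1 b₀} := by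
  rcases tcancel_nwz_or_of_mem_nwreg h1 ha.2 with hN | hmin1 | hmax2
  · rcases tcancel_sez_or_of_mem_sereg h1 hb.1 with hS | hmax1 | hmin2
    · exact (SplitSetting.mk h1 h2 h8 (solvableAt_strip h1 h2 h8 hab p)
        (tcancelSplit_strip h1 h4 hN hS)).tcancel
    · exact tcancel_of_forall_ge1 h1 fun x hx y _ => ge1_trans h1 hx.2 (hmax1 y.1)
    · exact hN.1.mono fun x hx => ⟨hmin2 x.2, hx.1⟩
  · exact tcancel_of_forall_ge1 h1 fun x _ y hy => ge1_trans h1 (hmin1 x.1) hy.1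
  · rcases tcancel_sez_or_of_mem_sereg h1 hb.1 with hS | hmax1 | hmin2
    · exact hS.1.mono fun x hx => ⟨hx.2, hmax2 x.2⟩
    · exact tcancel_of_forall_ge1 h1 fun x hx y _ => ge1_trans h1 hx.2 (hmax1 y.1)
    · exact tcancel_of_forall_ge2 h1 fun x _ y _ => ge2_trans h1 (hmin2 x.2) (hmax2 y.2)

/-- If `a₀ ≽₁ b₀` and both `a₀p` and `b₀p` lie in Θ, then triple cancellation holds on
`X_{a₀b₀} × X₂`. -/
theorem tripleCancel_on_strip {X₁ X₂ : Type*} [Nonempty X₁] [Nonempty X₂]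
    (R : X₁ × X₂ → X₁ × X₂ → Prop)
    (h1 : A1 R) (h2 : A2 R) (h3 : A3 R) (h4 : A4 R) (h8 : A8 R)
    (a₀ b₀ : X₁) (hab : Ge1 R a₀ b₀) (p : X₂)
    (ha : (a₀, p) ∈ Theta R) (hb : (b₀, p) ∈ Theta R) :
    TCancel R {x : X₁ × X₂ | Ge1 R a₀ x.1 ∧ Ge1 R x.1 b₀} :=
  tripleCancel_on_strip_general R h1 h2 h4 h8 a₀ b₀ hab p ha hb
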